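/- Fractional Sobolev norm bound for indefinite integrals (estimate (3-39)): let 0<α<1, T>0, and let f:[0,T]→ℝ^d be measurable with ∫₀^t (t−r)^{−α}|f(r)| dr < ∞ for a given t∈[0,T]. Writing F(s)=∫₀^s f(r)dr, one has ‖F‖_{α,[0,t]} := |F(t)| + ∫₀^t (t−s)^{−1−α} |F(t)−F(s)| ds ≤ (t^α + α^{−1}) ∫₀^t (t−r)^{−α} |f(r)| dr; in particular ‖F‖_{α,[0,t]} ≤ C ∫₀^t (t−r)^{−α}|f(r)| dr for a constant C depending only on α and T. -/

import Mathlib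

open MeasureTheory Real Set Filter
noncomputable section

set_option maxHeartbeats 1000000

/-- `V k` is the Euclidean space `ℝ^k`. -/
abbrev V (k : ℕ) : Type := EuclideanSpace ℝ (Fin k)

/-- The fractional Sobolev-type norm `‖f‖_{α,[0,t]} = |f(t)| + ∫₀^t |f(t)-f(s)|/(t-s)^{α+1} ds`. -/
def sobNorm {E : Type*} [NormedAddCommGroup E] (α t : ℝ) (f : ℝ → E) : ℝ :=
  ‖f t‖ + ∫ s in (0:ℝ)..t, ‖f t - f s‖ / (t - s) ^ (α + 1)

/-- Fractional Sobolev norm bound for indefinite integrals (estimate (3-39)):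
if `f : [0,T] → ℝ^d` is measurable with `∫₀^t (t−r)^{−α}|f(r)|dr < ∞`, then writing
`F(s) = ∫₀^s f(r)dr` one has
`‖F‖_{α,[0,t]} ≤ (t^α + α⁻¹) ∫₀^t (t−r)^{−α}|f(r)|dr`; in particular
`‖F‖_{α,[0,t]} ≤ C ∫₀^t (t−r)^{−α}|f(r)|dr` for a constant `C` depending only on `α, T`. -/
theorem stmt19 {d : ℕ} (α T : ℝ) (hα : 0 < α ∧ α < 1) (hT : 0 < T)
    (f : ℝ → V d) (hf : Measurable f) (t : ℝ) (ht : t ∈ Set.Icc 0 T)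
    (hint : IntegrableOn (fun r => ‖f r‖ * (t - r) ^ (-α)) (Set.Ioc 0 t)) :
    sobNorm α t (fun s => ∫ r in (0:ℝ)..s, f r)
        ≤ (t ^ α + α⁻¹) * ∫ r in (0:ℝ)..t, ‖f r‖ * (t - r) ^ (-α) ∧
    ∃ C : ℝ, 0 < C ∧
      sobNorm α t (fun s => ∫ r in (0:ℝ)..s, f r)
        ≤ C * ∫ r in (0:ℝ)..t, ‖f r‖ * (t - r) ^ (-α) := by
  obtain ⟨hα0, hα1⟩ := hα
  obtain ⟨ht0, htT⟩ := ht
  set F : ℝ → V d := fun s => ∫ r in (0:ℝ)..s, f r with hFdef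
  set I : ℝ := ∫ r in (0:ℝ)..t, ‖f r‖ * (t - r) ^ (-α) with hIdef
  have hI_nonneg : 0 ≤ I := by
    refine intervalIntegral.integral_nonneg ht0 fun r hr => ?_
    exact mul_nonneg (norm_nonneg _) (Real.rpow_nonneg (by linarith [hr.2]) _)
  have hIset : I = ∫ r in Ioc 0 t, ‖f r‖ * (t - r) ^ (-α) :=
    intervalIntegral.integral_of_le ht0
  -- a.e. every point differs from t
  have haet : ∀ᵐ r : ℝ, r ≠ t := by
    have h1 : {a : ℝ | ¬ a ≠ t} = {t} := by ext a; simp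
    rw [ae_iff, h1]
    exact measure_singleton t
  -- the a.e. pointwise bound on ‖f‖
  have hbound : ∀ᵐ r ∂(volume.restrict (Ioc 0 t)),
      ‖f r‖ ≤ t ^ α * (‖f r‖ * (t - r) ^ (-α)) := by
    filter_upwards [ae_restrict_mem measurableSet_Ioc, ae_restrict_of_ae haet] with r hr hrt
    have h1 : 0 < t - r := lt_of_le_of_ne (by linarith [hr.2]) (by intro h; exact hrt (by linarith))
    have h2 : (t - r) ^ α ≤ t ^ α :=
      Real.rpow_le_rpow h1.le (by linarith [hr.1]) hα0.le
    have h3 : (t - r) ^ (-α) * (t - r) ^ α = 1 := by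
      rw [← Real.rpow_add h1]; simp
    have h4 : 0 ≤ ‖f r‖ * (t - r) ^ (-α) :=
      mul_nonneg (norm_nonneg _) (Real.rpow_nonneg h1.le _)
    calc ‖f r‖ = (‖f r‖ * (t - r) ^ (-α)) * (t - r) ^ α := by rw [mul_assoc, h3, mul_one]
    _ ≤ (‖f r‖ * (t - r) ^ (-α)) * t ^ α := by gcongr
    _ = t ^ α * (‖f r‖ * (t - r) ^ (-α)) := mul_comm _ _
  have hfInt : IntegrableOn f (Ioc 0 t) :=
    (hint.const_mul (t ^ α)).mono' hf.aestronglyMeasurable.restrict hbound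
  have hfII : IntervalIntegrable f volume 0 t :=
    (intervalIntegrable_iff_integrableOn_Ioc_of_le ht0).2 hfInt
  have hFt : F t = ∫ r in Ioc 0 t, f r := intervalIntegral.integral_of_le ht0
  -- first bound : ‖F t‖ ≤ t ^ α * I
  have h1 : ‖F t‖ ≤ t ^ α * I := by
    rw [hFt, hIset, ← MeasureTheory.integral_const_mul]
    calc ‖∫ r in Ioc 0 t, f r‖ ≤ ∫ r in Ioc 0 t, ‖f r‖ :=
      norm_integral_le_integral_norm _
    _ ≤ ∫ r in Ioc 0 t, t ^ α * (‖f r‖ * (t - r) ^ (-α)) :=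
      integral_mono_ae hfInt.norm (hint.const_mul _) hbound
  -- now the singular integral term
  set g : ℝ → ℝ := fun s => ‖F t - F s‖ / (t - s) ^ (α + 1) with hgdef
  have hFcont : ContinuousOn F (Icc 0 t) := by
    have hicc : IntegrableOn f (uIcc 0 t) volume := by
      rw [uIcc_of_le ht0]
      exact (integrableOn_Icc_iff_integrableOn_Ioc).2 hfInt
    have h := intervalIntegral.continuousOn_primitive_interval
      (μ := volume) (f := f) (a := 0) (b := t) hicc
    rwa [uIcc_of_le ht0] at h
  have hgmeas : AEStronglyMeasurable g (volume.restrict (Ioc 0 t)) := by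
    have hm1 : AEStronglyMeasurable (fun s => ‖F t - F s‖) (volume.restrict (Ioc 0 t)) :=
      ((continuousOn_const.sub (hFcont.mono Ioc_subset_Icc_self)).norm).aestronglyMeasurable
        measurableSet_Ioc
    have hm2 : Measurable fun s : ℝ => (t - s) ^ (α + 1) :=
      (measurable_const.sub measurable_id).pow measurable_const
    have hmul : AEStronglyMeasurable (fun s => ‖F t - F s‖ * ((t - s) ^ (α + 1))⁻¹)
        (volume.restrict (Ioc 0 t)) := hm1.mul hm2.inv.aestronglyMeasurable
    exact hmul.congr (ae_of_all _ fun s => (div_eq_mul_inv _ _).symm)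
  have hgnn : 0 ≤ᵐ[volume.restrict (Ioc 0 t)] g := by
    filter_upwards [ae_restrict_mem measurableSet_Ioc] with s hs
    exact div_nonneg (norm_nonneg _) (Real.rpow_nonneg (by linarith [hs.2]) _)
  have hJ : (∫ s in (0:ℝ)..t, g s) = (∫⁻ s in Ioc 0 t, ENNReal.ofReal (g s)).toReal := by
    rw [intervalIntegral.integral_of_le ht0, integral_eq_lintegral_of_nonneg_ae hgnn hgmeas]
  set c : ℝ → ENNReal := fun s => ENNReal.ofReal ((t - s) ^ (-(α + 1))) with hcdef
  have hcmeas : Measurable c :=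
    ((measurable_const.sub measurable_id).pow measurable_const).ennreal_ofReal
  -- pointwise bound in ENNReal
  have hL2 : (∫⁻ s in Ioc 0 t, ENNReal.ofReal (g s))
      ≤ ∫⁻ s in Ioc 0 t, (∫⁻ r in Ioc s t, (‖f r‖₊ : ENNReal)) * c s := by
    refine lintegral_mono_ae ?_
    filter_upwards [ae_restrict_mem measurableSet_Ioc, ae_restrict_of_ae haet] with s hs hst
    have hst' : s < t := lt_of_le_of_ne hs.2 hst
    have hts : 0 < t - s := by linarith
    have hFdiff : F t - F s = ∫ r in Ioc s t, f r := by
      have hIIs : IntervalIntegrable f volume 0 s :=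
        (intervalIntegrable_iff_integrableOn_Ioc_of_le hs.1.le).2
          (hfInt.mono_set (Ioc_subset_Ioc_right hst'.le))
      rw [hFdef]
      simp only
      rw [intervalIntegral.integral_interval_sub_left hfII hIIs,
        intervalIntegral.integral_of_le hst'.le]
    have hgs : ENNReal.ofReal (g s) = (‖F t - F s‖₊ : ENNReal) * c s := by
      rw [hgdef]
      simp only
      rw [div_eq_mul_inv, ← Real.rpow_neg hts.le, ENNReal.ofReal_mul (norm_nonneg _),
        ofReal_norm, enorm_eq_nnnorm, hcdef]
    rw [hgs]
    refine mul_le_mul_left ?_ _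
    rw [hFdiff]
    exact enorm_integral_le_lintegral_enorm _
  -- Tonelli / Fubini swap
  have hφmeas : AEMeasurable
      (Function.uncurry fun s r => if s < r then (‖f r‖₊ : ENNReal) * c s else 0)
      ((volume.restrict (Ioc (0:ℝ) t)).prod (volume.restrict (Ioc (0:ℝ) t))) := by
    refine Measurable.aemeasurable ?_
    have hm1 : Measurable fun p : ℝ × ℝ => (‖f p.2‖₊ : ENNReal) * c p.1 :=
      ((hf.comp measurable_snd).enorm).mul (hcmeas.comp measurable_fst)
    exact Measurable.ite (measurableSet_lt measurable_fst measurable_snd) hm1 measurable_const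
  have hswap : (∫⁻ s in Ioc 0 t, (∫⁻ r in Ioc s t, (‖f r‖₊ : ENNReal)) * c s)
      = ∫⁻ r in Ioc 0 t, (‖f r‖₊ : ENNReal) * ∫⁻ s in Ioo 0 r, c s := by
    have step1 : (∫⁻ s in Ioc 0 t, (∫⁻ r in Ioc s t, (‖f r‖₊ : ENNReal)) * c s)
        = ∫⁻ s in Ioc 0 t, ∫⁻ r in Ioc 0 t,
            (if s < r then (‖f r‖₊ : ENNReal) * c s else 0) := by
      refine setLIntegral_congr_fun measurableSet_Ioc (fun s hs => ?_)
      have hset : Ioi s ∩ Ioc 0 t = Ioc s t := by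
        ext x
        simp only [Set.mem_inter_iff, Set.mem_Ioi, Set.mem_Ioc]
        constructor
        · rintro ⟨hx1, hx2, hx3⟩; exact ⟨hx1, hx3⟩
        · rintro ⟨hx1, hx2⟩; exact ⟨hx1, by linarith [hs.1], hx2⟩
      calc (∫⁻ r in Ioc s t, (‖f r‖₊ : ENNReal)) * c s
          = ∫⁻ r in Ioc s t, (‖f r‖₊ : ENNReal) * c s :=
            (lintegral_mul_const' (c s) _ ENNReal.ofReal_ne_top).symm
        _ = ∫⁻ r in Ioi s ∩ Ioc 0 t, (‖f r‖₊ : ENNReal) * c s := by rw [hset]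
        _ = ∫⁻ r in Ioc 0 t, (Ioi s).indicator (fun r => (‖f r‖₊ : ENNReal) * c s) r := by
            rw [lintegral_indicator measurableSet_Ioi,
              Measure.restrict_restrict measurableSet_Ioi]
        _ = ∫⁻ r in Ioc 0 t, (if s < r then (‖f r‖₊ : ENNReal) * c s else 0) := by
            refine lintegral_congr fun r => ?_
            by_cases h : s < r <;> simp [Set.indicator, h, Set.mem_Ioi]
    have step2 : (∫⁻ s in Ioc (0:ℝ) t, ∫⁻ r in Ioc (0:ℝ) t,
            (if s < r then (‖f r‖₊ : ENNReal) * c s else 0))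
        = ∫⁻ r in Ioc (0:ℝ) t, ∫⁻ s in Ioc (0:ℝ) t,
            (if s < r then (‖f r‖₊ : ENNReal) * c s else 0) :=
      lintegral_lintegral_swap hφmeas
    have step3 : (∫⁻ r in Ioc (0:ℝ) t, ∫⁻ s in Ioc (0:ℝ) t,
            (if s < r then (‖f r‖₊ : ENNReal) * c s else 0))
        = ∫⁻ r in Ioc 0 t, (‖f r‖₊ : ENNReal) * ∫⁻ s in Ioo 0 r, c s := by
      refine setLIntegral_congr_fun measurableSet_Ioc (fun r hr => ?_)
      have hset2 : Iio r ∩ Ioc 0 t = Ioo 0 r := by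
        ext x
        simp only [Set.mem_inter_iff, Set.mem_Iio, Set.mem_Ioc, Set.mem_Ioo]
        constructor
        · rintro ⟨hx1, hx2, hx3⟩; exact ⟨hx2, hx1⟩
        · rintro ⟨hx1, hx2⟩; exact ⟨hx2, hx1, by linarith [hr.2]⟩
      calc (∫⁻ s in Ioc (0:ℝ) t, (if s < r then (‖f r‖₊ : ENNReal) * c s else 0))
          = ∫⁻ s in Ioc 0 t, (Iio r).indicator (fun s => (‖f r‖₊ : ENNReal) * c s) s := by
            refine lintegral_congr fun s => ?_
            by_cases h : s < r <;> simp [Set.indicator, h, Set.mem_Iio]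
        _ = ∫⁻ s in Iio r ∩ Ioc 0 t, (‖f r‖₊ : ENNReal) * c s := by
            rw [lintegral_indicator measurableSet_Iio,
              Measure.restrict_restrict measurableSet_Iio]
        _ = ∫⁻ s in Ioo 0 r, (‖f r‖₊ : ENNReal) * c s := by rw [hset2]
        _ = (‖f r‖₊ : ENNReal) * ∫⁻ s in Ioo 0 r, c s :=
            lintegral_const_mul' _ _ ENNReal.coe_ne_top
    exact step1.trans (step2.trans step3)
  -- bound the inner integral
  have hinner : ∀ᵐ r ∂(volume.restrict (Ioc 0 t)),
      (‖f r‖₊ : ENNReal) * (∫⁻ s in Ioo 0 r, c s)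
        ≤ (‖f r‖₊ : ENNReal) * ENNReal.ofReal (α⁻¹ * (t - r) ^ (-α)) := by
    filter_upwards [ae_restrict_mem measurableSet_Ioc, ae_restrict_of_ae haet] with r hr hrt
    have hr' : r < t := lt_of_le_of_ne hr.2 hrt
    have h0r : 0 < r := hr.1
    have htr : 0 < t - r := by linarith
    refine mul_le_mul_right ?_ _
    have hcont : ContinuousOn (fun s : ℝ => (t - s) ^ (-(α + 1))) (Icc 0 r) := by
      refine ContinuousOn.rpow_const ((continuous_const.sub continuous_id).continuousOn)
        fun s hs => Or.inl ?_
      show t - s ≠ 0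
      exact ne_of_gt (by linarith [hs.2])
    have hintc : IntegrableOn (fun s : ℝ => (t - s) ^ (-(α + 1))) (Ioo 0 r) :=
      (hcont.integrableOn_Icc).mono_set Ioo_subset_Icc_self
    have hnnc : 0 ≤ᵐ[volume.restrict (Ioo 0 r)] fun s : ℝ => (t - s) ^ (-(α + 1)) := by
      filter_upwards [ae_restrict_mem measurableSet_Ioo] with s hs
      exact Real.rpow_nonneg (by linarith [hs.2]) _
    have hcalc : (∫ s in (0:ℝ)..r, (t - s) ^ (-(α + 1)))
        = ((t - r) ^ (-α) - t ^ (-α)) / α := by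
      rw [intervalIntegral.integral_comp_sub_left (fun u : ℝ => u ^ (-(α + 1))) t]
      rw [integral_rpow (Or.inr ⟨by intro h; apply hα0.ne'; linarith, by
        rw [Set.mem_uIcc]; push_neg
        constructor
        · intro h; linarith
        · intro h; linarith⟩)]
      have hexp : -(α + 1) + 1 = -α := by ring
      rw [hexp, sub_zero, div_neg, ← neg_div, neg_sub]
    calc (∫⁻ s in Ioo 0 r, c s)
        = ENNReal.ofReal (∫ s in Ioo 0 r, (t - s) ^ (-(α + 1))) :=
          (ofReal_integral_eq_lintegral_ofReal hintc hnnc).symm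
      _ ≤ ENNReal.ofReal (α⁻¹ * (t - r) ^ (-α)) := by
          refine ENNReal.ofReal_le_ofReal ?_
          have hIoo : (∫ s in Ioo (0:ℝ) r, (t - s) ^ (-(α + 1)))
              = ∫ s in (0:ℝ)..r, (t - s) ^ (-(α + 1)) := by
            rw [intervalIntegral.integral_of_le h0r.le, integral_Ioc_eq_integral_Ioo]
          rw [hIoo, hcalc]
          have hnn : 0 ≤ t ^ (-α) := Real.rpow_nonneg (by linarith) _
          rw [div_eq_mul_inv, mul_comm]
          gcongr
          linarith
  -- evaluating the resulting integral
  have hL3 : (∫⁻ r in Ioc 0 t, (‖f r‖₊ : ENNReal) * ENNReal.ofReal (α⁻¹ * (t - r) ^ (-α)))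
      = ENNReal.ofReal (α⁻¹ * I) := by
    have hcongr : ∀ᵐ r ∂(volume.restrict (Ioc 0 t)),
        (‖f r‖₊ : ENNReal) * ENNReal.ofReal (α⁻¹ * (t - r) ^ (-α))
          = ENNReal.ofReal α⁻¹ * ENNReal.ofReal (‖f r‖ * (t - r) ^ (-α)) := by
      filter_upwards [ae_restrict_mem measurableSet_Ioc] with r hr
      rw [ENNReal.ofReal_mul (by positivity), ENNReal.ofReal_mul (norm_nonneg _),
        ofReal_norm, enorm_eq_nnnorm]
      ring
    rw [lintegral_congr_ae hcongr, lintegral_const_mul' _ _ ENNReal.ofReal_ne_top,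
      ← ofReal_integral_eq_lintegral_ofReal hint ?_, ← hIset, ← ENNReal.ofReal_mul (by positivity)]
    filter_upwards [ae_restrict_mem measurableSet_Ioc] with r hr
    exact mul_nonneg (norm_nonneg _) (Real.rpow_nonneg (by linarith [hr.2]) _)
  -- second bound
  have h2 : (∫ s in (0:ℝ)..t, g s) ≤ α⁻¹ * I := by
    rw [hJ]
    have hle : (∫⁻ s in Ioc 0 t, ENNReal.ofReal (g s)) ≤ ENNReal.ofReal (α⁻¹ * I) := by
      refine hL2.trans ?_
      rw [hswap]
      exact (lintegral_mono_ae hinner).trans (le_of_eq hL3)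
    calc (∫⁻ s in Ioc 0 t, ENNReal.ofReal (g s)).toReal
        ≤ (ENNReal.ofReal (α⁻¹ * I)).toReal :=
          ENNReal.toReal_mono ENNReal.ofReal_ne_top hle
      _ = α⁻¹ * I := ENNReal.toReal_ofReal (mul_nonneg (by positivity) hI_nonneg)
  have hmain : sobNorm α t F ≤ (t ^ α + α⁻¹) * I := by
    have : sobNorm α t F = ‖F t‖ + ∫ s in (0:ℝ)..t, g s := rfl
    rw [this, add_mul]
    exact add_le_add h1 h2
  refine ⟨hmain, T ^ α + α⁻¹, by positivity, hmain.trans ?_⟩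
  have htT' : t ^ α ≤ T ^ α := Real.rpow_le_rpow ht0 htT hα0.le
  gcongr
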